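/- arXiv:1104.3984 — 5 statements merged into one kernel-verified Lean document; each statement's English description precedes it below -/
import Mathlib

section
/- Let t > 0 and n ∈ ℕ, n ≥ 1. The function F*(z^n, t) = exp(-t·(1+z^n)/(1-z^n)) is holomorphic on the open unit disk, satisfies 0 < |F*(z^n,t)| < 1 there and takes the value e^{-t} at 0, and the modulus of its n-th Taylor coefficient at 0 equals exactly 2t·e^{-t}. -/
open Complex Topology

/-- deriv of a function analytic at a point is analytic at that point. -/
private lemma analyticAt_deriv' {f : ℂ → ℂ} {x : ℂ} (h : AnalyticAt ℂ f x) :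
    AnalyticAt ℂ (deriv f) x := by
  obtain ⟨s, hs, hos⟩ := h.exists_mem_nhds_analyticOnNhd
  exact hos.deriv x (mem_of_mem_nhds hs)

private lemma iteratedDeriv_pow_mul (m : ℕ) {A : ℂ → ℂ} (hA : AnalyticAt ℂ A 0) :
    iteratedDeriv m (fun z => z ^ m * A z) 0 = (m.factorial : ℂ) * A 0 := by
  induction m generalizing A with
  | zero => simp
  | succ m ih =>
    rw [iteratedDeriv_succ']
    have h1 : deriv (fun z => z ^ (m + 1) * A z) =ᶠ[𝓝 (0 : ℂ)]
        (fun z => z ^ m * (((m : ℂ) + 1) * A z + z * deriv A z)) := by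
      filter_upwards [hA.eventually_analyticAt] with z hz
      rw [deriv_fun_mul (differentiableAt_pow _) hz.differentiableAt, deriv_pow_field]
      push_cast
      ring
    rw [h1.iteratedDeriv_eq m]
    have hA1 : AnalyticAt ℂ (fun z => ((m : ℂ) + 1) * A z + z * deriv A z) 0 :=
      ((analyticAt_const.mul hA).add (analyticAt_id.mul (analyticAt_deriv' hA)))
    rw [ih hA1]
    simp only [Nat.factorial_succ]
    push_cast
    ring

/-- The extremal function `z ↦ F*(zⁿ, t) = exp(-t (1+zⁿ)/(1-zⁿ))` is holomorphic
on the unit disk, satisfies `0 < |F*(zⁿ,t)| < 1` there, takes the value `e^{-t}`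
at `0`, and the modulus of its `n`-th Taylor coefficient at `0` is exactly
`2 t e^{-t}`. -/
theorem krzyz_extremal_function (t : ℝ) (ht : 0 < t) (n : ℕ) (hn : 1 ≤ n) :
    DifferentiableOn ℂ
        (fun z : ℂ => Complex.exp (-(t : ℂ) * (1 + z ^ n) / (1 - z ^ n)))
        (Metric.ball (0 : ℂ) 1) ∧
      (∀ z ∈ Metric.ball (0 : ℂ) 1,
        0 < ‖Complex.exp (-(t : ℂ) * (1 + z ^ n) / (1 - z ^ n))‖ ∧
        ‖Complex.exp (-(t : ℂ) * (1 + z ^ n) / (1 - z ^ n))‖ < 1) ∧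
      Complex.exp (-(t : ℂ) * (1 + (0 : ℂ) ^ n) / (1 - (0 : ℂ) ^ n))
        = Complex.exp (-(t : ℂ)) ∧
      ‖(iteratedDeriv n
          (fun z : ℂ => Complex.exp (-(t : ℂ) * (1 + z ^ n) / (1 - z ^ n))) 0
          / (n.factorial : ℂ))‖ = 2 * t * Real.exp (-t) := by
  have hn0 : n ≠ 0 := Nat.one_le_iff_ne_zero.mp hn
  -- denominator nonzero on ball
  have hne : ∀ z : ℂ, z ∈ Metric.ball (0 : ℂ) 1 → (1 : ℂ) - z ^ n ≠ 0 := by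
    intro z hz h
    rw [sub_eq_zero] at h
    have hz1 : ‖z‖ < 1 := by simpa using hz
    have : ‖z ^ n‖ < 1 := by
      rw [norm_pow]
      exact pow_lt_one₀ (norm_nonneg z) hz1 hn0
    rw [← h] at this
    simp at this
  refine ⟨?_, ?_, ?_, ?_⟩
  · -- differentiability
    intro z hz
    exact (DifferentiableAt.cexp (((differentiableAt_const _).mul
      ((differentiableAt_const _).add (differentiableAt_pow n : DifferentiableAt ℂ (fun x : ℂ => x ^ n) z))).div
      ((differentiableAt_const _).sub (differentiableAt_pow n : DifferentiableAt ℂ (fun x : ℂ => x ^ n) z)) (hne z hz))).differentiableWithinAt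
  · -- modulus bounds
    intro z hz
    have hz1 : ‖z ^ n‖ < 1 := by
      rw [norm_pow]
      exact pow_lt_one₀ (norm_nonneg z) (by simpa using hz) hn0
    set u : ℂ := z ^ n with hu
    have hnsq : Complex.normSq u < 1 := by
      rw [← Complex.sq_norm] at *
      nlinarith [norm_nonneg u]
    have hden : (1 : ℂ) - u ≠ 0 := hne z hz
    have hq : ((1 + u) / (1 - u)).re = (1 - Complex.normSq u) / Complex.normSq (1 - u) := by
      rw [Complex.div_re, Complex.normSq_apply]
      simp only [Complex.add_re, Complex.one_re, Complex.sub_re, Complex.add_im,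
        Complex.one_im, Complex.sub_im]
      rw [Complex.normSq_apply]
      ring
    have hqpos : 0 < ((1 + u) / (1 - u)).re := by
      rw [hq]
      exact div_pos (by linarith) (Complex.normSq_pos.mpr hden)
    have hre : (-(t : ℂ) * (1 + u) / (1 - u)).re = -t * ((1 + u) / (1 - u)).re := by
      rw [mul_div_assoc]
      simp [Complex.mul_re]
    rw [Complex.norm_exp, hre]
    constructor
    · exact Real.exp_pos _
    · apply Real.exp_lt_one_iff.mpr
      nlinarith
  · norm_num [zero_pow hn0]
  · -- the Taylor coefficient
    set g : ℂ → ℂ := fun w => Complex.exp (-(t : ℂ) * (1 + w) / (1 - w)) with hgdef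
    have hg : AnalyticAt ℂ g 0 := by
      apply AnalyticAt.cexp
      exact (analyticAt_const.mul (analyticAt_const.add analyticAt_id)).div
        (analyticAt_const.sub analyticAt_id) (by norm_num)
    have hg0 : g 0 = Complex.exp (-(t : ℂ)) := by simp [hgdef]
    -- derivative of g at 0
    have hdg : HasDerivAt g (Complex.exp (-(t : ℂ)) * (-2 * t)) 0 := by
      have hnum : HasDerivAt (fun w : ℂ => -(t : ℂ) * (1 + w)) (-(t : ℂ)) 0 := by
        simpa using ((hasDerivAt_id (0 : ℂ)).const_add (1 : ℂ)).const_mul (-(t : ℂ))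
      have hden' : HasDerivAt (fun w : ℂ => (1 : ℂ) - w) (-1) 0 := by
        exact (hasDerivAt_id (0 : ℂ)).const_sub (1 : ℂ)
      have key := (hnum.div hden' (by norm_num)).cexp
      refine key.congr_deriv ?_
      norm_num
      try ring
    have hderiv_g : deriv g 0 = Complex.exp (-(t : ℂ)) * (-2 * t) := hdg.deriv
    -- A z = dslope g 0 (z^n)
    set A : ℂ → ℂ := fun z => dslope g 0 (z ^ n) with hAdef
    obtain ⟨p, hp⟩ := hg
    have hdsl : AnalyticAt ℂ (dslope g 0) 0 := hp.has_fpower_series_dslope_fslope.analyticAt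
    have hA : AnalyticAt ℂ A 0 := by
      have hpow : AnalyticAt ℂ (fun z : ℂ => z ^ n) 0 := analyticAt_id.pow n
      have h0 : AnalyticAt ℂ (dslope g 0) ((0 : ℂ) ^ n) := by
        rw [zero_pow hn0]; exact hdsl
      exact AnalyticAt.comp (f := fun z : ℂ => z ^ n) (x := (0 : ℂ)) h0 hpow
    have hA0 : A 0 = Complex.exp (-(t : ℂ)) * (-2 * t) := by
      simp only [hAdef, zero_pow hn0, dslope_same, hderiv_g]
    -- decomposition f = g 0 + z^n * A z
    have hdecomp : (fun z : ℂ => Complex.exp (-(t : ℂ) * (1 + z ^ n) / (1 - z ^ n)))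
        = fun z => g 0 + z ^ n * A z := by
      funext z
      have := sub_smul_dslope g 0 (z ^ n)
      simp only [sub_zero, smul_eq_mul] at this
      simp only [hAdef]
      rw [this]
      simp [hgdef]
    rw [hdecomp]
    have hstep1 : iteratedDeriv n (fun z : ℂ => g 0 + z ^ n * A z) 0
        = iteratedDeriv n (fun z : ℂ => z ^ n * A z) 0 := by
      obtain ⟨k, rfl⟩ : ∃ k, n = k + 1 := ⟨n - 1, by omega⟩
      rw [iteratedDeriv_succ', iteratedDeriv_succ']
      congr 1
      funext w
      exact deriv_const_add _
    rw [hstep1, iteratedDeriv_pow_mul n hA, hA0]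
    have hfac : (n.factorial : ℂ) ≠ 0 := by exact_mod_cast n.factorial_ne_zero
    rw [mul_comm ((n.factorial : ℂ)) _, mul_div_assoc, div_self hfac, mul_one]
    rw [norm_mul, Complex.norm_exp]
    have h1 : (-(t : ℂ)).re = -t := by simp
    have h2 : ‖-2 * (t : ℂ)‖ = 2 * t := by
      rw [norm_mul]
      simp [abs_of_pos ht]
    rw [h1, h2]
    ring
end

section
/- Let S be a function holomorphic and injective on the open unit disk Δ with S(0) = 0, S'(0) = 1, whose image S(Δ) is a convex set. Let s be holomorphic on Δ and subordinate to S, i.e. s(z) = S(ω(z)) for some holomorphic ω : Δ → Δ with ω(0) = 0. Then for every n ≥ 1 the n-th Taylor coefficient of s at 0 satisfies |s^{(n)}(0)/n!| ≤ 1. -/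
open Complex Metric Set Filter Topology


lemma rootsum (n : ℕ) (hn : 0 < n) (m : ℕ) :
    ∑ k ∈ Finset.range n, (Complex.exp (2 * Real.pi * Complex.I * (m / n))) ^ k
      = if n ∣ m then (n : ℂ) else 0 := by
  set u : ℂ := Complex.exp (2 * Real.pi * Complex.I * (m / n)) with hu
  have hnC : (n : ℂ) ≠ 0 := Nat.cast_ne_zero.mpr hn.ne'
  by_cases h : n ∣ m
  · obtain ⟨t, rfl⟩ := h
    have : u = 1 := by
      rw [hu, Complex.exp_eq_one_iff]
      refine ⟨t, ?_⟩
      push_cast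
      field_simp
    simp [this, Dvd.intro t rfl]
  · have hu1 : u ≠ 1 := by
      intro he
      rw [hu, Complex.exp_eq_one_iff] at he
      obtain ⟨k, hk⟩ := he
      have h2 : (2 * Real.pi * Complex.I : ℂ) ≠ 0 := by
        simp [Complex.ext_iff, Real.pi_ne_zero]
      have hm : (m : ℂ) = k * n := by
        field_simp at hk
        apply mul_left_cancel₀ h2
        rw [hk]; ring
      have : (m : ℤ) = k * n := by exact_mod_cast hm
      exact h (Int.natCast_dvd_natCast.mp ⟨k, by rw [this]; ring⟩)
    have hun : u ^ n = 1 := by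
      rw [hu, ← Complex.exp_nat_mul, Complex.exp_eq_one_iff]
      refine ⟨m, ?_⟩
      push_cast
      field_simp
    rw [geom_sum_eq hu1, hun]
    simp [h]


lemma deriv_ne_zero_of_injOn {S : ℂ → ℂ}
    (hS : DifferentiableOn ℂ S (ball (0:ℂ) 1))
    (hSinj : Set.InjOn S (ball (0:ℂ) 1))
    {z0 : ℂ} (hz0 : z0 ∈ ball (0:ℂ) 1) :
    deriv S z0 ≠ 0 := by
  intro hd0
  have hball : ball (0:ℂ) 1 ∈ 𝓝 z0 := isOpen_ball.mem_nhds hz0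
  have hSa : AnalyticAt ℂ S z0 := hS.analyticAt hball
  set f : ℂ → ℂ := fun z => S z - S z0 with hfdef
  have hf : AnalyticAt ℂ f z0 := hSa.sub analyticAt_const
  have hderivf : deriv f z0 = 0 := by
    rw [hfdef]; rw [deriv_sub_const]; exact hd0
  -- no two distinct points of the ball have equal S values
  have key : ∀ z1 ∈ ball (0:ℂ) 1, ∀ z2 ∈ ball (0:ℂ) 1, S z1 = S z2 → z1 = z2 := hSinj
  rcases eq_or_ne (analyticOrderAt f z0) ⊤ with htop | hfin
  · -- S is locally constant: contradiction with injectivity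
    have hev : ∀ᶠ z in 𝓝 z0, f z = 0 := (analyticOrderAt_eq_top).mp htop
    have : ∀ᶠ z in 𝓝[≠] z0, f z = 0 ∧ z ∈ ball (0:ℂ) 1 :=
      eventually_nhdsWithin_of_eventually_nhds (s := {z0}ᶜ) (hev.and (eventually_mem_nhds_iff.mpr (isOpen_ball.mem_nhds hz0) |>.mono fun z hz => mem_of_mem_nhds hz))
    obtain ⟨z, ⟨hz1, hz2⟩, hzne⟩ := (this.and self_mem_nhdsWithin).exists
    exact hzne (hSinj hz2 hz0 (by rwa [hfdef, sub_eq_zero] at hz1))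
  · obtain ⟨m, hm⟩ := ENat.ne_top_iff_exists.mp hfin
    obtain ⟨g, hg, hg0, hev⟩ := (hf.analyticOrderAt_eq_natCast).mp hm.symm
    -- m ≠ 0
    have hm0 : m ≠ 0 := by
      rintro rfl
      have := hev.self_of_nhds
      simp [hfdef] at this
      exact hg0 this.symm
    -- m ≠ 1
    have hm1 : m ≠ 1 := by
      rintro rfl
      have h1 : deriv f z0 = g z0 := by
        rw [Filter.EventuallyEq.deriv_eq hev]
        have : HasDerivAt (fun z => (z - z0) ^ 1 • g z) (g z0) z0 := by
          have h2 : HasDerivAt (fun z : ℂ => (z - z0)) 1 z0 :=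
            (hasDerivAt_id z0).sub_const z0
          have h3 : HasDerivAt g (deriv g z0) z0 := hg.differentiableAt.hasDerivAt
          have h4 := ((h2.pow 1).mul h3 : HasDerivAt
            (fun z : ℂ => (z - z0) ^ 1 * g z) _ z0)
          simp only [pow_one, smul_eq_mul]; simp at h4; exact h4
        exact this.deriv
      rw [hderivf] at h1
      exact hg0 h1.symm
    have hm2 : 2 ≤ m := by omega
    have hmC : (m : ℂ) ≠ 0 := Nat.cast_ne_zero.mpr hm0
    set c : ℂ := g z0 with hc
    set w0 : ℂ := Complex.exp (Complex.log c / m) with hw0def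
    have hw0m : w0 ^ m = c := by
      rw [hw0def, ← Complex.exp_nat_mul]
      rw [mul_div_cancel₀ _ hmC]
      exact Complex.exp_log hg0
    have hw0 : w0 ≠ 0 := Complex.exp_ne_zero _
    set r : ℂ → ℂ := fun z => w0 * Complex.exp (Complex.log (g z / c) / m) with hrdef
    have hra : AnalyticAt ℂ r z0 := by
      apply analyticAt_const.mul
      apply AnalyticAt.cexp
      apply AnalyticAt.mul _ analyticAt_const
      apply AnalyticAt.clog (hg.div analyticAt_const hg0)
      simp [← hc, div_self hg0]
    have hr0 : r z0 = w0 := by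
      simp [hrdef, ← hc, div_self hg0, Complex.log_one]
    have hrpow : ∀ᶠ z in 𝓝 z0, r z ^ m = g z := by
      filter_upwards [hg.continuousAt.eventually_ne hg0] with z hz
      rw [hrdef]
      simp only [mul_pow, hw0m]
      rw [← Complex.exp_nat_mul, mul_div_cancel₀ _ hmC, Complex.exp_log (by
        simp [div_eq_zero_iff, hz, hg0])]
      field_simp
    set φ : ℂ → ℂ := fun z => (z - z0) * r z with hφdef
    have hφ0 : φ z0 = 0 := by simp [hφdef]
    have hφev : ∀ᶠ z in 𝓝 z0, S z = S z0 + φ z ^ m := by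
      filter_upwards [hev, hrpow] with z h1 h2
      have : φ z ^ m = f z := by
        rw [hφdef]
        simp only [mul_pow, h2]
        rw [h1]; simp [smul_eq_mul]
      rw [this, hfdef]; ring
    have hφa : AnalyticAt ℂ φ z0 := ((analyticAt_id.sub analyticAt_const).mul hra)
    have hφd : HasDerivAt φ w0 z0 := by
      have h2 : HasDerivAt (fun z : ℂ => z - z0) 1 z0 := (hasDerivAt_id z0).sub_const z0
      have h3 : HasDerivAt r (deriv r z0) z0 := hra.differentiableAt.hasDerivAt
      have := h2.mul h3
      simp [hr0] at this; exact this
    have hst : HasStrictDerivAt φ w0 z0 := by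
      obtain ⟨p, hp⟩ := hφa
      have h1 := hp.hasStrictDerivAt
      have h2 := h1.hasDerivAt.unique hφd
      rwa [h2] at h1
    -- local inverse of φ
    have hF := hst.hasStrictFDerivAt_equiv hw0
    set li := hF.localInverse φ _ z0 with hli
    have hRinv : ∀ᶠ y in 𝓝 (0:ℂ), φ (li y) = y := by
      have := hF.eventually_right_inverse
      rwa [hφ0] at this
    have hT : Filter.Tendsto li (𝓝 0) (𝓝 z0) := by
      have := hF.localInverse_tendsto
      rwa [hφ0] at this
    -- the root of unity
    set ζ : ℂ := Complex.exp (2 * Real.pi * Complex.I / m) with hζdef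
    have hζm : ζ ^ m = 1 := by
      rw [hζdef, ← Complex.exp_nat_mul, mul_div_cancel₀ _ hmC, Complex.exp_two_pi_mul_I]
    have hζ1 : ζ ≠ 1 := by
      intro he
      rw [hζdef, Complex.exp_eq_one_iff] at he
      obtain ⟨k, hk⟩ := he
      have h2 : (2 * Real.pi * Complex.I : ℂ) ≠ 0 := by
        simp [Complex.ext_iff, Real.pi_ne_zero]
      have hkm : (1:ℂ) = k * m := by
        apply mul_left_cancel₀ h2
        calc (2*Real.pi*Complex.I) * 1 = 2*Real.pi*Complex.I := by ring
          _ = (2*Real.pi*Complex.I/m) * m := by field_simp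
          _ = (k * (2*Real.pi*Complex.I)) * m := by rw [hk]
          _ = 2*Real.pi*Complex.I * (k * m) := by ring
      have hkmZ : (1:ℤ) = k * m := by exact_mod_cast hkm
      have hdvd : (m:ℤ) ∣ 1 := ⟨k, by linarith [hkmZ]⟩
      have := Int.le_of_dvd one_pos hdvd
      omega
    -- find a small nonzero w
    have hA : ∀ᶠ z in 𝓝 z0, z ∈ ball (0:ℂ) 1 ∧ S z = S z0 + φ z ^ m := by
      filter_upwards [hball, hφev] with z h1 h2 using ⟨h1, h2⟩
    have hE : ∀ᶠ w in 𝓝 (0:ℂ), φ (li w) = w ∧ li w ∈ ball (0:ℂ) 1 ∧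
        S (li w) = S z0 + φ (li w) ^ m := by
      filter_upwards [hRinv, hT.eventually hA] with w h1 ⟨h2, h3⟩ using ⟨h1, h2, h3⟩
    have hζT : Filter.Tendsto (fun w : ℂ => ζ * w) (𝓝 0) (𝓝 0) := by
      exact (continuous_const.mul continuous_id :
        Continuous fun w : ℂ => ζ * w).tendsto' 0 0 (by simp)
    have hE' : ∀ᶠ w in 𝓝 (0:ℂ), (φ (li w) = w ∧ li w ∈ ball (0:ℂ) 1 ∧
        S (li w) = S z0 + φ (li w) ^ m) ∧ (φ (li (ζ * w)) = ζ * w ∧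
        li (ζ * w) ∈ ball (0:ℂ) 1 ∧ S (li (ζ * w)) = S z0 + φ (li (ζ * w)) ^ m) :=
      hE.and (hζT.eventually hE)
    obtain ⟨w, ⟨⟨hw1, hw2, hw3⟩, ⟨hv1, hv2, hv3⟩⟩, hwne⟩ :=
      ((eventually_nhdsWithin_of_eventually_nhds (s := {(0:ℂ)}ᶜ) hE').and
        self_mem_nhdsWithin).exists
    have hwne : w ≠ 0 := hwne
    have hSeq : S (li w) = S (li (ζ * w)) := by
      rw [hw3, hv3, hw1, hv1, mul_pow, hζm, one_mul]
    have heq := hSinj hw2 hv2 hSeq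
    have : w = ζ * w := by
      rw [← hv1, ← heq]
      exact hw1.symm
    have : (ζ - 1) * w = 0 := by linear_combination -this
    rcases mul_eq_zero.mp this with h | h
    · exact hζ1 (by linear_combination h)
    · exact hwne h


lemma hasDerivAt_invFunOn {S : ℂ → ℂ}
    (hS : DifferentiableOn ℂ S (ball (0:ℂ) 1))
    (hSinj : Set.InjOn S (ball (0:ℂ) 1))
    {z : ℂ} (hz : z ∈ ball (0:ℂ) 1) :
    HasDerivAt (Function.invFunOn S (ball (0:ℂ) 1)) (deriv S z)⁻¹ (S z) := by
  have hne := deriv_ne_zero_of_injOn hS hSinj hz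
  have hball : ball (0:ℂ) 1 ∈ 𝓝 z := isOpen_ball.mem_nhds hz
  have hSa : AnalyticAt ℂ S z := hS.analyticAt hball
  have hst : HasStrictDerivAt S (deriv S z) z := by
    obtain ⟨p, hp⟩ := hSa
    have h1 := hp.hasStrictDerivAt
    have h2 := h1.hasDerivAt.deriv
    rwa [h2]
  have hF := hst.hasStrictFDerivAt_equiv hne
  have hli : HasStrictDerivAt (hst.localInverse S (deriv S z) z hne)
      (deriv S z)⁻¹ (S z) := hst.to_localInverse hne
  have hev : Function.invFunOn S (ball (0:ℂ) 1) =ᶠ[𝓝 (S z)]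
      hst.localInverse S (deriv S z) z hne := by
    have hTend : Filter.Tendsto (hst.localInverse S (deriv S z) z hne)
        (𝓝 (S z)) (𝓝 z) := hF.localInverse_tendsto
    filter_upwards [hF.eventually_right_inverse, hTend.eventually (isOpen_ball.eventually_mem hz)]
      with y h1 h2
    have hy : ∃ a ∈ ball (0:ℂ) 1, S a = y := ⟨_, h2, h1⟩
    exact hSinj (Function.invFunOn_mem hy) h2
      ((Function.invFunOn_eq hy).trans h1.symm)
  exact hli.hasDerivAt.congr_of_eventuallyEq hev


lemma main_est
    (S : ℂ → ℂ)
    (hS : DifferentiableOn ℂ S (Metric.ball (0 : ℂ) 1))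
    (hSinj : Set.InjOn S (Metric.ball (0 : ℂ) 1))
    (hS0 : S 0 = 0) (hS1 : deriv S 0 = 1)
    (hconv : Convex ℝ (S '' Metric.ball (0 : ℂ) 1))
    (s ω : ℂ → ℂ)
    (hω : DifferentiableOn ℂ ω (Metric.ball (0 : ℂ) 1))
    (hωmaps : Set.MapsTo ω (Metric.ball (0 : ℂ) 1) (Metric.ball (0 : ℂ) 1))
    (hω0 : ω 0 = 0)
    (hsub : ∀ z ∈ Metric.ball (0 : ℂ) 1, s z = S (ω z))
    (n : ℕ) (hn : 1 ≤ n) (r : NNReal) (hr0 : 0 < r) (hr1 : (r : ℝ) < 1) :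
    ‖iteratedDeriv n s 0 / (n.factorial : ℂ)‖ ≤ 1 / (r : ℝ) ^ n := by
  have hn0 : n ≠ 0 := by omega
  have hnC : (n : ℂ) ≠ 0 := Nat.cast_ne_zero.mpr hn0
  have hnR : (0:ℝ) < n := by exact_mod_cast Nat.pos_of_ne_zero hn0
  -- s is differentiable on the unit ball
  have hsd : DifferentiableOn ℂ s (ball (0:ℂ) 1) :=
    (hS.comp hω hωmaps).congr hsub
  have hscb : DifferentiableOn ℂ s (closedBall (0:ℂ) r) :=
    hsd.mono (closedBall_subset_ball hr1)
  set p : FormalMultilinearSeries ℂ ℂ ℂ := cauchyPowerSeries s 0 r with hpdef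
  have hp : HasFPowerSeriesOnBall s p 0 r := hscb.hasFPowerSeriesOnBall hr0
  set a : ℕ → ℂ := fun m => p.coeff m with hadef
  -- the coefficient `a n` is the quantity we must bound
  have han : iteratedDeriv n s 0 / (n.factorial : ℂ) = a n := by
    have h := hp.factorial_smul (1:ℂ) n
    rw [iteratedDeriv_eq_iteratedFDeriv]
    rw [← h]
    have : (p n fun _ => (1:ℂ)) = a n := by
      rw [FormalMultilinearSeries.apply_eq_pow_smul_coeff]; simp [hadef]
    rw [this, nsmul_eq_mul]
    field_simp [Nat.cast_ne_zero.mpr n.factorial_ne_zero]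
  -- the auxiliary series with coefficients a (n*m)
  set q : FormalMultilinearSeries ℂ ℂ ℂ :=
    FormalMultilinearSeries.ofScalars ℂ (fun m => a (n*m)) with hqdef
  set R : NNReal := r ^ n with hRdef
  have hRpos : 0 < R := pow_pos hr0 n
  have hqrad : (R : ENNReal) ≤ q.radius := by
    apply ENNReal.le_of_forall_nnreal_lt
    intro ρ hρ
    have hρR : ρ < R := by exact_mod_cast hρ
    set ρ' : NNReal := ρ ^ ((n:ℝ)⁻¹) with hρ'def
    have hρ'n : ρ' ^ n = ρ := by
      rw [hρ'def, ← NNReal.rpow_natCast (ρ ^ ((n:ℝ)⁻¹)) n, ← NNReal.rpow_mul]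
      rw [inv_mul_cancel₀ (by positivity), NNReal.rpow_one]
    have hρ'r : ρ' < r := by
      by_contra hcon
      push_neg at hcon
      have := pow_le_pow_left₀ zero_le hcon n
      rw [hρ'n] at this
      exact absurd (lt_of_lt_of_le hρR this) (lt_irrefl _)
    have hρ'rad : (ρ' : ENNReal) < p.radius :=
      lt_of_lt_of_le (by exact_mod_cast hρ'r) hp.r_le
    obtain ⟨C, hC0, hC⟩ := p.norm_mul_pow_le_of_lt_radius hρ'rad
    apply q.le_radius_of_bound C
    intro m
    have h1 : ‖q m‖ = ‖a (n*m)‖ := by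
      rw [hqdef]; exact FormalMultilinearSeries.ofScalars_norm ℂ _ m
    have h2 : ‖a (n*m)‖ ≤ ‖p (n*m)‖ := by
      have h := (p (n*m)).le_opNorm (fun _ => (1:ℂ))
      simp only [norm_one, Finset.prod_const, one_pow, mul_one] at h
      have heq : ((p (n*m)) fun _ => (1:ℂ)) = a (n*m) := by
        rw [FormalMultilinearSeries.apply_eq_pow_smul_coeff]; simp [hadef]
      rwa [heq] at h
    have h3 : ((ρ:ℝ))^m = ((ρ':ℝ))^(n*m) := by
      rw [← hρ'n]
      push_cast
      rw [← pow_mul]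
    calc ‖q m‖ * (ρ:ℝ)^m = ‖a (n*m)‖ * (ρ:ℝ)^m := by rw [h1]
      _ ≤ ‖p (n*m)‖ * (ρ':ℝ)^(n*m) := by
          rw [h3]; gcongr
      _ ≤ C := hC (n*m)
  have hg : HasFPowerSeriesOnBall q.sum q 0 (R : ENNReal) :=
    (q.hasFPowerSeriesOnBall (lt_of_lt_of_le (by exact_mod_cast hRpos) hqrad)).mono
      (by exact_mod_cast hRpos) hqrad
  -- the root of unity
  set ε : ℂ := Complex.exp (2 * Real.pi * Complex.I * ((1:ℂ) / n)) with hεdef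
  have hεabs : ∀ k : ℕ, ‖ε ^ k‖ = 1 := by
    intro k
    rw [norm_pow, hεdef]
    rw [show (2 * Real.pi * Complex.I * ((1:ℂ)/n)) = ((2 * Real.pi / n : ℝ) : ℂ) * Complex.I by
      push_cast; field_simp]
    rw [Complex.norm_exp_ofReal_mul_I]
    exact one_pow k
  have hεpow : ∀ m : ℕ, ε ^ m = Complex.exp (2 * Real.pi * Complex.I * (m / n)) := by
    intro m
    rw [hεdef, ← Complex.exp_nat_mul]
    congr 1
    push_cast
    ring
  -- the key identity : q.sum (z^n) is the average of s over rotations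
  have hkey : ∀ z : ℂ, ‖z‖ < r →
      q.sum (z ^ n) = (n:ℂ)⁻¹ * ∑ k ∈ Finset.range n, s (ε ^ k * z) := by
    intro z hz
    set c : ℕ → ℂ := fun m => if n ∣ m then a m * z ^ m else 0 with hcdef
    have hmemball : ∀ k : ℕ, (ε ^ k * z) ∈ Metric.eball (0:ℂ) r := by
      intro k
      rw [Metric.mem_eball, edist_zero_right]
      have : ‖ε ^ k * z‖₊ < r := by
        rw [← NNReal.coe_lt_coe]
        simp only [coe_nnnorm, norm_mul]
        calc ‖ε ^ k‖ * ‖z‖ = ‖z‖ := by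
              rw [hεabs k, one_mul]
          _ < r := hz
      exact_mod_cast this
    have hsum1 : ∀ k ∈ Finset.range n,
        HasSum (fun m => a m * (ε ^ k * z) ^ m) (s (ε ^ k * z)) := by
      intro k _
      have := hp.hasSum (hmemball k)
      simp only [zero_add] at this
      convert this using 2 with m
      · rfl
      rw [FormalMultilinearSeries.apply_eq_pow_smul_coeff, smul_eq_mul, mul_comm]
    have H2 : HasSum (fun m => (n:ℂ)⁻¹ * ∑ k ∈ Finset.range n, a m * (ε ^ k * z) ^ m)
        ((n:ℂ)⁻¹ * ∑ k ∈ Finset.range n, s (ε ^ k * z)) :=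
      (hasSum_sum hsum1).mul_left _
    have H2' : HasSum c ((n:ℂ)⁻¹ * ∑ k ∈ Finset.range n, s (ε ^ k * z)) := by
      convert H2 using 1
      funext m
      rw [hcdef]
      have hterm : ∀ k, a m * (ε ^ k * z) ^ m = a m * z ^ m * ((ε ^ m) ^ k) := by
        intro k
        rw [mul_pow, ← pow_mul, mul_comm k m, pow_mul]
        ring
      simp only [hterm]
      rw [← Finset.mul_sum]
      rw [show ∑ k ∈ Finset.range n, (ε ^ m) ^ k
            = if n ∣ m then (n:ℂ) else 0 by rw [hεpow m]; exact rootsum n (Nat.pos_of_ne_zero hn0) m]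
      by_cases h : n ∣ m
      · simp only [h, if_true]
        field_simp
      · simp [h]
    have H3 : HasSum (fun j => a (n*j) * (z ^ n) ^ j) (q.sum (z ^ n)) := by
      have hzn : (z ^ n) ∈ Metric.eball (0:ℂ) (R : ENNReal) := by
        rw [Metric.mem_eball, edist_zero_right]
        have : ‖z ^ n‖₊ < R := by
          rw [← NNReal.coe_lt_coe]
          simp only [coe_nnnorm, norm_pow, hRdef]
          push_cast
          exact pow_lt_pow_left₀ hz (norm_nonneg z) hn0
        exact_mod_cast this
      have := hg.hasSum hzn
      simp only [zero_add] at this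
      convert this using 2 with j
      · rfl
      rw [hqdef, FormalMultilinearSeries.ofScalars_apply_eq, smul_eq_mul]
    have hinj : Function.Injective (fun j : ℕ => n * j) :=
      fun x y h => Nat.eq_of_mul_eq_mul_left (Nat.pos_of_ne_zero hn0) h
    have hvan : ∀ m, m ∉ Set.range (fun j : ℕ => n * j) → c m = 0 := by
      intro m hm
      rw [hcdef]
      have : ¬ n ∣ m := by
        intro ⟨j, hj⟩
        exact hm ⟨j, hj.symm⟩
      simp [this]
    have H5 : HasSum c (q.sum (z ^ n)) := by
      rw [← Function.Injective.hasSum_iff hinj hvan]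
      convert H3 using 1
      funext j
      simp only [Function.comp_apply, hcdef]
      rw [if_pos ⟨j, rfl⟩, pow_mul]
    exact H5.unique H2'
  -- q.sum maps the ball of radius R into the image of S
  have hΩ : ∀ w ∈ ball (0:ℂ) (R:ℝ), q.sum w ∈ S '' ball (0:ℂ) 1 := by
    intro w hw
    have hwR : ‖w‖ < (R:ℝ) := by
      simpa [Complex.dist_eq] using hw
    set z : ℂ := w ^ ((n:ℂ)⁻¹) with hzdef
    have hzn : z ^ n = w := Complex.cpow_nat_inv_pow w hn0
    have hzr : ‖z‖ < r := by
      have h1 : ‖z‖ ^ n < (r:ℝ) ^ n := by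
        rw [← norm_pow, hzn]
        calc ‖w‖ < (R:ℝ) := hwR
          _ = (r:ℝ) ^ n := by rw [hRdef]; push_cast; ring
      exact lt_of_pow_lt_pow_left₀ n r.coe_nonneg h1
    have hball1 : ∀ k : ℕ, ε ^ k * z ∈ ball (0:ℂ) 1 := by
      intro k
      rw [mem_ball_zero_iff, norm_mul,
        hεabs k, one_mul]
      exact lt_trans hzr hr1
    rw [← hzn, hkey z hzr]
    have hrw : (n:ℂ)⁻¹ * ∑ k ∈ Finset.range n, s (ε ^ k * z)
        = ∑ k ∈ Finset.range n, ((n:ℝ)⁻¹) • S (ω (ε ^ k * z)) := by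
      rw [Finset.mul_sum]
      refine Finset.sum_congr rfl fun k hk => ?_
      rw [hsub _ (hball1 k), Complex.real_smul]
      push_cast
      ring
    rw [hrw]
    refine hconv.sum_mem (fun k _ => by positivity) ?_
      (fun k hk => ⟨ω (ε ^ k * z), hωmaps (hball1 k), rfl⟩)
    rw [Finset.sum_const, Finset.card_range, nsmul_eq_mul]
    field_simp
  -- the inverse function and the composed map
  set Sinv : ℂ → ℂ := Function.invFunOn S (ball (0:ℂ) 1) with hSinvdef
  set ψ : ℂ → ℂ := fun w => Sinv (q.sum w) with hψdef
  have hgdiff : DifferentiableOn ℂ q.sum (ball (0:ℂ) (R:ℝ)) := by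
    have := hg.differentiableOn
    rwa [Metric.emetric_ball_nnreal] at this
  have hψdiffAt : ∀ w ∈ ball (0:ℂ) (R:ℝ), DifferentiableAt ℂ ψ w ∧ ψ w ∈ ball (0:ℂ) 1 := by
    intro w hw
    obtain ⟨zz, hzz, hzzeq⟩ := hΩ w hw
    have hinv := hasDerivAt_invFunOn hS hSinj hzz
    rw [hzzeq] at hinv
    have hgd : DifferentiableAt ℂ q.sum w :=
      hgdiff.differentiableAt (isOpen_ball.mem_nhds hw)
    constructor
    · exact (hinv.differentiableAt.comp w hgd :
        DifferentiableAt ℂ (fun w => Sinv (q.sum w)) w)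
    · exact Function.invFunOn_mem ⟨zz, hzz, hzzeq⟩
  have hψdiff : DifferentiableOn ℂ ψ (ball (0:ℂ) (R:ℝ)) :=
    fun w hw => ((hψdiffAt w hw).1).differentiableWithinAt
  have hψmaps : MapsTo ψ (ball (0:ℂ) (R:ℝ)) (ball (0:ℂ) 1) :=
    fun w hw => (hψdiffAt w hw).2
  -- values at the origin
  have hs0 : s 0 = 0 := by
    rw [hsub 0 (mem_ball_self one_pos), hω0, hS0]
  have ha0 : a 0 = 0 := by
    have h := hp.coeff_zero (fun _ => (1:ℂ))
    have h2 : p.coeff 0 = (p 0 fun _ => (1:ℂ)) := by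
      rw [FormalMultilinearSeries.apply_eq_pow_smul_coeff]; simp
    rw [hadef]
    simp only [h2, h, hs0]
  have hg0 : q.sum 0 = 0 := by
    have h := hg.coeff_zero (fun _ => (1:ℂ))
    have h2 : (q 0 fun _ => (1:ℂ)) = a 0 := by
      rw [hqdef, FormalMultilinearSeries.ofScalars_apply_eq]
      simp
    rw [← h, h2, ha0]
  have h0mem : (0:ℂ) ∈ ball (0:ℂ) 1 := mem_ball_self one_pos
  have hSinv0 : Sinv 0 = 0 := by
    have hy : ∃ u ∈ ball (0:ℂ) 1, S u = 0 := ⟨0, h0mem, hS0⟩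
    refine hSinj (Function.invFunOn_mem hy) h0mem ?_
    rw [Function.invFunOn_eq hy, hS0]
  have hψ0 : ψ 0 = 0 := by
    rw [hψdef]
    simp only [hg0, hSinv0]
  -- derivative of ψ at the origin
  have hqc1 : q.coeff 1 = a n := by
    have h2 : q.coeff 1 = (q 1 fun _ => (1:ℂ)) := by
      rw [FormalMultilinearSeries.apply_eq_pow_smul_coeff]; simp
    rw [h2, hqdef, FormalMultilinearSeries.ofScalars_apply_eq]
    simp
  have hRR : (0:ℝ) < (R:ℝ) := by exact_mod_cast hRpos
  have hgd0 : DifferentiableAt ℂ q.sum 0 :=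
    hgdiff.differentiableAt (isOpen_ball.mem_nhds (mem_ball_self hRR))
  set d0 : ℂ := (deriv S 0)⁻¹ with hd0def
  have hinv' : HasDerivAt Sinv d0 (q.sum 0) := by
    rw [hg0, ← hS0]
    exact hasDerivAt_invFunOn hS hSinj h0mem
  have hψD : HasDerivAt ψ (d0 * deriv q.sum 0) 0 :=
    HasDerivAt.comp 0 hinv' hgd0.hasDerivAt
  have hdψ : deriv ψ 0 = a n := by
    rw [hψD.deriv, hd0def, hS1, hg.hasFPowerSeriesAt.deriv]
    rw [hqdef, FormalMultilinearSeries.ofScalars_apply_eq]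
    simp
  -- Schwarz lemma
  have hmaps' : MapsTo ψ (ball (0:ℂ) (R:ℝ)) (ball (ψ 0) 1) := by
    rwa [hψ0]
  have hfinal := Complex.norm_deriv_le_div_of_mapsTo_ball hψdiff (hmaps'.mono_right ball_subset_closedBall) hRR
  rw [hdψ] at hfinal
  rw [han]
  calc ‖a n‖ ≤ 1 / (R:ℝ) := hfinal
    _ = 1 / (r:ℝ) ^ n := by rw [hRdef]; push_cast; ring

/-- Lemma 1 (subordination to a convex univalent function): if `s` is
subordinate on the unit disk to a convex univalent function `S` normalized by
`S 0 = 0`, `S' 0 = 1`, then all Taylor coefficients of `s` are bounded by `1`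
in modulus. -/
theorem coeff_bound_of_subordinate_to_convex
    (S : ℂ → ℂ)
    (hS : DifferentiableOn ℂ S (Metric.ball (0 : ℂ) 1))
    (hSinj : Set.InjOn S (Metric.ball (0 : ℂ) 1))
    (hS0 : S 0 = 0) (hS1 : deriv S 0 = 1)
    (hconv : Convex ℝ (S '' Metric.ball (0 : ℂ) 1))
    (s ω : ℂ → ℂ)
    (hω : DifferentiableOn ℂ ω (Metric.ball (0 : ℂ) 1))
    (hωmaps : Set.MapsTo ω (Metric.ball (0 : ℂ) 1) (Metric.ball (0 : ℂ) 1))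
    (hω0 : ω 0 = 0)
    (hsub : ∀ z ∈ Metric.ball (0 : ℂ) 1, s z = S (ω z))
    (n : ℕ) (hn : 1 ≤ n) :
    ‖iteratedDeriv n s 0 / (n.factorial : ℂ)‖ ≤ 1 := by
  have key : ∀ r : ℝ, 0 < r → r < 1 →
      ‖iteratedDeriv n s 0 / (n.factorial : ℂ)‖ ≤ 1 / r ^ n := by
    intro r h0 h1
    have := main_est S hS hSinj hS0 hS1 hconv s ω hω hωmaps hω0 hsub n hn
      ⟨r, h0.le⟩ (by exact_mod_cast h0) (by exact_mod_cast h1)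
    exact this
  have hlim : Filter.Tendsto (fun r : ℝ => 1 / r ^ n) (𝓝[<] (1:ℝ)) (𝓝 (1 / 1 ^ n)) := by
    apply Filter.Tendsto.mono_left ?_ nhdsWithin_le_nhds
    exact continuousAt_const.div ((continuous_pow n).continuousAt) (by norm_num)
  have hev : ∀ᶠ r in 𝓝[<] (1:ℝ),
      ‖iteratedDeriv n s 0 / (n.factorial : ℂ)‖ ≤ 1 / r ^ n := by
    filter_upwards [Ioo_mem_nhdsLT_of_mem
      (show (1:ℝ) ∈ Set.Ioc (0:ℝ) 1 by constructor <;> norm_num)] with r hr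
    exact key r hr.1 hr.2
  have := ge_of_tendsto hlim hev
  simpa using this
end

section
/- Let t be a real number and n ≥ 0 an integer. Let A be the (n+1) × (n+1) real matrix with entries A_{ij} = 2·(1 - |i - j|·t) for 0 ≤ i, j ≤ n (so A has diagonal entries 2 and is a symmetric Toeplitz matrix). Then det A = 2^{2n} · t^n · (2 - n·t). -/
open Matrix Finset

/-- Row-differencing matrix: row `i` of `toepM * A` is `R_i - R_{i-1}` (row `0` unchanged). -/
noncomputable def toepM (n : ℕ) : Matrix (Fin (n+1)) (Fin (n+1)) ℝ :=
  Matrix.of fun i j => if i = j then 1 else if (j:ℕ)+1 = (i:ℕ) then -1 else 0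

/-- Adds half of every other row to row `0`. -/
noncomputable def toepN (n : ℕ) : Matrix (Fin (n+1)) (Fin (n+1)) ℝ :=
  Matrix.of fun i j => if i = j then 1 else if (i:ℕ) = 0 then 1/2 else 0

/-- The arrowhead matrix `toepM * A * toepMᵀ`. -/
noncomputable def toepB (n : ℕ) (t : ℝ) : Matrix (Fin (n+1)) (Fin (n+1)) ℝ :=
  Matrix.of fun i j =>
    if i = j then (if (i:ℕ) = 0 then 2 else 4*t)
    else if (i:ℕ) = 0 ∨ (j:ℕ) = 0 then -(2*t) else 0

/-- The final lower-triangular matrix `toepN * toepB`. -/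
noncomputable def toepT (n : ℕ) (t : ℝ) : Matrix (Fin (n+1)) (Fin (n+1)) ℝ :=
  Matrix.of fun i j =>
    if i = j then (if (i:ℕ) = 0 then 2 - n*t else 4*t)
    else if (j:ℕ) = 0 then -(2*t) else 0

lemma two_term_sum {m : ℕ} (a b : Fin m) (hab : a ≠ b) (f : Fin m → ℝ) :
    ∑ k, (if a = k then 1 else if b = k then (-1:ℝ) else 0) * f k = f a - f b := by
  have h : ∀ k, (if a = k then 1 else if b = k then (-1:ℝ) else 0) * f k
      = (if a = k then f k else 0) - (if b = k then f k else 0) := by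
    intro k
    rcases eq_or_ne a k with h | h
    · have : b ≠ k := fun hb => hab (h.trans hb.symm)
      simp [h, this]
    · rcases eq_or_ne b k with h2 | h2 <;> simp [h, h2]
  simp only [h, Finset.sum_sub_distrib, Finset.sum_ite_eq, Finset.mem_univ, if_true]

lemma one_term_sum {m : ℕ} (a : Fin m) (f : Fin m → ℝ) :
    ∑ k, (if a = k then (1:ℝ) else 0) * f k = f a := by
  simp [ite_mul, Finset.sum_ite_eq]

lemma toepM_zero_sum {n : ℕ} (f : Fin (n+1) → ℝ) :
    ∑ k, toepM n 0 k * f k = f 0 := by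
  have h : ∀ k : Fin (n+1), toepM n 0 k = if (0:Fin (n+1)) = k then (1:ℝ) else 0 := by
    intro k
    simp only [toepM, Matrix.of_apply, Fin.ext_iff, Fin.val_zero]
    split_ifs <;> simp_all
  simp only [h]; exact one_term_sum 0 f

lemma toepM_succ_sum {n : ℕ} (j : Fin n) (f : Fin (n+1) → ℝ) :
    ∑ k, toepM n j.succ k * f k = f j.succ - f j.castSucc := by
  have h : ∀ k : Fin (n+1), toepM n j.succ k
      = if j.succ = k then (1:ℝ) else if j.castSucc = k then -1 else 0 := by
    intro k
    simp only [toepM, Matrix.of_apply, Fin.ext_iff, Fin.val_succ, Fin.coe_castSucc]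
    split_ifs <;> simp_all
  simp only [h]
  exact two_term_sum _ _ (Fin.castSucc_lt_succ : j.castSucc < j.succ).ne' f

lemma second_diff (x y t : ℝ) (hxy : x = y ∨ x + 1 ≤ y ∨ y + 1 ≤ x) :
    2*(1-|x+1-(y+1)| * t) - 2*(1-|x-(y+1)| * t) - (2*(1-|x+1-y| * t) - 2*(1-|x-y| * t))
    = if x = y then 4*t else 0 := by
  rcases hxy with h | h | h
  · rw [if_pos h]
    rw [show x+1-(y+1) = 0 by linarith, show x-(y+1) = -1 by linarith,
      show x+1-y = 1 by linarith, show x-y = 0 by linarith]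
    simp; ring
  · rw [if_neg (by linarith)]
    rw [abs_of_nonpos (by linarith : x+1-(y+1) ≤ 0), abs_of_nonpos (by linarith : x-(y+1) ≤ 0),
      abs_of_nonpos (by linarith : x+1-y ≤ 0), abs_of_nonpos (by linarith : x-y ≤ 0)]
    ring
  · rw [if_neg (by linarith)]
    rw [abs_of_nonneg (by linarith : 0 ≤ x+1-(y+1)), abs_of_nonneg (by linarith : 0 ≤ x-(y+1)),
      abs_of_nonneg (by linarith : 0 ≤ x+1-y), abs_of_nonneg (by linarith : 0 ≤ x-y)]
    ring

lemma toepMAM (n : ℕ) (t : ℝ) (A : Matrix (Fin (n+1)) (Fin (n+1)) ℝ)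
    (hA : ∀ i j : Fin (n + 1), A i j = 2 * (1 - |(i : ℝ) - (j : ℝ)| * t)) :
    toepM n * A * (toepM n)ᵀ = toepB n t := by
  have hXM : ∀ (X : Matrix (Fin (n+1)) (Fin (n+1)) ℝ) (i j : Fin (n+1)),
      (X * (toepM n)ᵀ) i j = ∑ k, toepM n j k * X i k := by
    intro X i j
    rw [Matrix.mul_apply]
    congr 1; funext k; rw [Matrix.transpose_apply, mul_comm]
  have hMA : ∀ i j : Fin (n+1), (toepM n * A) i j = ∑ k, toepM n i k * A k j := by
    intro i j; rw [Matrix.mul_apply]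
  ext i j
  induction j using Fin.cases with
  | zero =>
    rw [hXM, toepM_zero_sum (f := fun k => (toepM n * A) i k)]
    induction i using Fin.cases with
    | zero =>
      rw [hMA, toepM_zero_sum (f := fun k => A k 0)]
      simp [hA, toepB]
    | succ i' =>
      rw [hMA, toepM_succ_sum (j := i') (f := fun k => A k 0)]
      rw [hA, hA]
      have hne : i'.succ ≠ (0 : Fin (n+1)) := Fin.succ_ne_zero i'
      simp only [toepB, Matrix.of_apply, Fin.val_succ, Fin.coe_castSucc, Fin.val_zero,
        Nat.cast_add, Nat.cast_one, Nat.cast_zero, if_neg hne]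
      rw [if_pos (Or.inr trivial)]
      have hx : (0:ℝ) ≤ (i' : ℕ) := Nat.cast_nonneg _
      rw [abs_of_nonneg (by linarith : (0:ℝ) ≤ ((i':ℕ):ℝ) + 1 - 0),
        abs_of_nonneg (by linarith : (0:ℝ) ≤ ((i':ℕ):ℝ) - 0)]
      ring
  | succ j' =>
    rw [hXM, toepM_succ_sum (j := j') (f := fun k => (toepM n * A) i k)]
    induction i using Fin.cases with
    | zero =>
      rw [hMA, hMA, toepM_zero_sum (f := fun k => A k j'.succ),
        toepM_zero_sum (f := fun k => A k j'.castSucc)]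
      rw [hA, hA]
      have hne : (0 : Fin (n+1)) ≠ j'.succ := (Fin.succ_ne_zero j').symm
      simp only [toepB, Matrix.of_apply, Fin.val_succ, Fin.coe_castSucc, Fin.val_zero,
        Nat.cast_add, Nat.cast_one, Nat.cast_zero, if_neg hne]
      rw [if_pos (Or.inl trivial)]
      have hy : (0:ℝ) ≤ (j' : ℕ) := Nat.cast_nonneg _
      rw [abs_of_nonpos (by linarith : (0:ℝ) - (((j':ℕ):ℝ) + 1) ≤ 0),
        abs_of_nonpos (by linarith : (0:ℝ) - ((j':ℕ):ℝ) ≤ 0)]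
      ring
    | succ i' =>
      rw [hMA, hMA, toepM_succ_sum (j := i') (f := fun k => A k j'.succ),
        toepM_succ_sum (j := i') (f := fun k => A k j'.castSucc)]
      rw [hA, hA, hA, hA]
      simp only [toepB, Matrix.of_apply, Fin.val_succ, Fin.coe_castSucc,
        Nat.cast_add, Nat.cast_one]
      have key := second_diff ((i':ℕ):ℝ) ((j':ℕ):ℝ) t (by
        rcases lt_trichotomy (i':ℕ) (j':ℕ) with h | h | h
        · right; left; exact_mod_cast Nat.succ_le_of_lt h
        · left; exact_mod_cast h
        · right; right; exact_mod_cast Nat.succ_le_of_lt h)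
      rw [key]
      have hiff : (i'.succ = j'.succ) ↔ (((i':ℕ):ℝ) = ((j':ℕ):ℝ)) := by
        rw [Fin.succ_inj, Fin.ext_iff, Nat.cast_inj]
      by_cases hij : ((i':ℕ):ℝ) = ((j':ℕ):ℝ)
      · rw [if_pos hij, if_pos (hiff.mpr hij)]
        simp
      · rw [if_neg hij, if_neg (fun h => hij (hiff.mp h))]
        have : ¬ ((i'.succ : ℕ) = 0) := by simp
        simp [this]

lemma toepNB (n : ℕ) (t : ℝ) : toepN n * toepB n t = toepT n t := by
  ext i j
  rw [Matrix.mul_apply]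
  induction i using Fin.cases with
  | succ i' =>
    have hcoef : ∀ k, toepN n i'.succ k = if i'.succ = k then (1:ℝ) else 0 := by
      intro k
      simp only [toepN, Matrix.of_apply]
      have : ¬ ((i'.succ : ℕ) = 0) := by simp
      simp [this]
    simp only [hcoef]
    rw [one_term_sum]
    have hine : ¬ ((i'.succ : ℕ) = 0) := by simp
    simp only [toepB, toepT, Matrix.of_apply]
    split_ifs with h1 h2 h3 h4 <;> simp_all
  | zero =>
    have hcoef : ∀ k, toepN n 0 k * toepB n t k j
        = (1/2) * toepB n t k j + (if (0:Fin (n+1)) = k then (1/2) * toepB n t k j else 0) := by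
      intro k
      simp only [toepN, Matrix.of_apply]
      rcases eq_or_ne (0 : Fin (n+1)) k with h | h
      · rw [← h]; simp; ring
      · simp [h, Ne.symm h]
    simp only [hcoef]
    rw [Finset.sum_add_distrib, Finset.sum_ite_eq, if_pos (Finset.mem_univ _), ← Finset.mul_sum]
    induction j using Fin.cases with
    | zero =>
      have hsum : ∑ k, toepB n t k 0 = 2 - n * (2*t) := by
        rw [Fin.sum_univ_succ]
        have h0 : toepB n t 0 0 = 2 := by simp [toepB]
        have hs : ∀ i : Fin n, toepB n t i.succ 0 = -(2*t) := by
          intro i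
          have h1 : i.succ ≠ (0 : Fin (n+1)) := Fin.succ_ne_zero i
          simp [toepB, h1]
        simp only [h0, hs, Finset.sum_const, Finset.card_univ, Fintype.card_fin, nsmul_eq_mul]
        ring
      rw [hsum]
      have h0 : toepB n t 0 0 = 2 := by simp [toepB]
      have hT : toepT n t 0 0 = 2 - n*t := by simp [toepT]
      rw [h0, hT]
      ring
    | succ j' =>
      have hsum : ∑ k, toepB n t k j'.succ = -(2*t) + 4*t := by
        rw [Fin.sum_univ_succ]
        have h0 : toepB n t 0 j'.succ = -(2*t) := by
          have : (0 : Fin (n+1)) ≠ j'.succ := (Fin.succ_ne_zero j').symm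
          simp [toepB, this]
        have hs : ∀ i : Fin n, toepB n t i.succ j'.succ = if j' = i then 4*t else 0 := by
          intro i
          have h1 : ¬ ((i.succ : ℕ) = 0) := by simp
          have h2 : ¬ ((j'.succ : ℕ) = 0) := by simp
          have h3 : (i.succ = j'.succ) ↔ (j' = i) := by rw [Fin.succ_inj, eq_comm]
          simp only [toepB, Matrix.of_apply, h2, h3]
          split_ifs <;> simp_all
        rw [h0]
        simp only [hs, Finset.sum_ite_eq, Finset.mem_univ, if_true]
      rw [hsum]
      have h0 : toepB n t 0 j'.succ = -(2*t) := by
        have : (0 : Fin (n+1)) ≠ j'.succ := (Fin.succ_ne_zero j').symm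
        simp [toepB, this]
      have hT : toepT n t 0 j'.succ = 0 := by
        have h1 : (0 : Fin (n+1)) ≠ j'.succ := (Fin.succ_ne_zero j').symm
        have h2 : ¬ ((j'.succ : ℕ) = 0) := by simp
        simp [toepT, h1, h2]
      rw [h0, hT]
      ring

lemma toepM_det (n : ℕ) : (toepM n).det = 1 := by
  rw [Matrix.det_of_lowerTriangular (toepM n) (by
    intro i j h
    have : i ≠ j := by
      simp only [OrderDual.toDual_lt_toDual] at h
      exact h.ne
    have h2 : ¬ ((j:ℕ) + 1 = (i:ℕ)) := by
      simp only [OrderDual.toDual_lt_toDual] at h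
      have := Fin.lt_iff_val_lt_val.mp h
      omega
    simp [toepM, this, h2])]
  simp [toepM]

lemma toepN_det (n : ℕ) : (toepN n).det = 1 := by
  rw [Matrix.det_of_upperTriangular (by
    intro i j h
    replace h : j < i := h
    have h1 : i ≠ j := h.ne'
    have h2 : ¬ ((i:ℕ) = 0) := by
      have := Fin.lt_iff_val_lt_val.mp h
      omega
    simp [toepN, h1, h2, show i ≠ 0 from fun h => h2 (by simp [h])])]
  simp [toepN]

lemma toepT_det (n : ℕ) (t : ℝ) : (toepT n t).det = (2 - n*t) * (4*t)^n := by
  rw [Matrix.det_of_lowerTriangular (toepT n t) (by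
    intro i j h
    simp only [OrderDual.toDual_lt_toDual] at h
    have h1 : i ≠ j := h.ne
    have h2 : ¬ ((j:ℕ) = 0) := by
      have := Fin.lt_iff_val_lt_val.mp h
      omega
    simp [toepT, h1, h2, show j ≠ 0 from fun h => h2 (by simp [h])])]
  rw [Fin.prod_univ_succ]
  have h0 : toepT n t 0 0 = 2 - n*t := by simp [toepT]
  have hs : ∀ i : Fin n, toepT n t i.succ i.succ = 4*t := by
    intro i
    have : ¬ ((i.succ : ℕ) = 0) := by simp
    simp [toepT, this]
  simp only [h0, hs, Finset.prod_const, Finset.card_univ, Fintype.card_fin]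

/-- Lemma 2: the determinant of the `(n+1) × (n+1)` symmetric Toeplitz matrix
with entries `A i j = 2 (1 - |i - j| t)` equals `2^{2n} tⁿ (2 - n t)`. -/
theorem toeplitz_minor_det (t : ℝ) (n : ℕ)
    (A : Matrix (Fin (n + 1)) (Fin (n + 1)) ℝ)
    (hA : ∀ i j : Fin (n + 1), A i j = 2 * (1 - |(i : ℝ) - (j : ℝ)| * t)) :
    A.det = 2 ^ (2 * n) * t ^ n * (2 - n * t) := by
  have key : (toepN n * (toepM n * A * (toepM n)ᵀ)).det = (toepT n t).det := by
    rw [toepMAM n t A hA, toepNB]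
  rw [Matrix.det_mul, Matrix.det_mul, Matrix.det_mul, Matrix.det_transpose,
    toepM_det, toepN_det, toepT_det] at key
  have hA' : A.det = (2 - n*t) * (4*t)^n := by linarith [key]
  rw [hA']
  have h4 : ((4:ℝ)*t)^n = 2^(2*n) * t^n := by
    rw [mul_pow, pow_mul]
    norm_num
  rw [h4]
  ring
end

section
/- The rational function h(z) = (1 + z - z³ - z⁴)/(1 + z⁴) is holomorphic on the open unit disk Δ, satisfies h(0) = 1, and has positive real part: Re h(z) > 0 for all z ∈ Δ. -/
lemma aux_ineq (x C s : ℝ) (hs0 : 0 ≤ s) (hs1 : s < 1)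
    (hx : x ^ 2 ≤ s) (hC : C ^ 2 ≤ s ^ 3) :
    0 < 1 - s ^ 4 + x * (1 - s ^ 3) - C * (1 - s) := by
  have h1 : -(1 + s) ≤ 2 * x := by nlinarith [sq_nonneg (1 - s)]
  have h2 : 2 * C ≤ s * (1 + s) := by nlinarith [sq_nonneg (s * (1 - s)), sq_nonneg s]
  have hcube : s ^ 3 ≤ 1 := by
    nlinarith [mul_nonneg (sub_nonneg.2 hs1.le) (sq_nonneg s),
      mul_nonneg (sub_nonneg.2 hs1.le) hs0]
  have h3 : 0 < (1 - s) ^ 3 * (1 + s) :=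
    mul_pos (pow_pos (by linarith) 3) (by linarith)
  have h4 : 0 ≤ (2 * x + 1 + s) * (1 - s ^ 3) :=
    mul_nonneg (by linarith) (by linarith)
  have h5 : 0 ≤ (s + s ^ 2 - 2 * C) * (1 - s) := by
    apply mul_nonneg (by linarith) (by linarith)
  nlinarith [h3, h4, h5]

lemma key_ineq (x y : ℝ) (h : x ^ 2 + y ^ 2 < 1) :
    0 < 1 - (x ^ 2 + y ^ 2) ^ 4 + x * (1 - (x ^ 2 + y ^ 2) ^ 3)
        - (x ^ 3 - 3 * x * y ^ 2) * (1 - (x ^ 2 + y ^ 2)) := by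
  apply aux_ineq _ _ _ (by positivity) h
  · nlinarith [sq_nonneg y]
  · nlinarith [sq_nonneg (y * (3 * x ^ 2 - y ^ 2)), sq_nonneg x, sq_nonneg y,
      sq_nonneg (x * y)]

/-- The rational function `h(z) = (1 + z - z³ - z⁴)/(1 + z⁴)` is holomorphic on
the unit disk, satisfies `h 0 = 1`, and has positive real part there
(i.e. it belongs to the Carathéodory class). -/
theorem example_caratheodory_function :
    DifferentiableOn ℂ
        (fun z : ℂ => (1 + z - z ^ 3 - z ^ 4) / (1 + z ^ 4))
        (Metric.ball (0 : ℂ) 1) ∧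
      (1 + (0 : ℂ) - (0 : ℂ) ^ 3 - (0 : ℂ) ^ 4) / (1 + (0 : ℂ) ^ 4) = 1 ∧
      ∀ z ∈ Metric.ball (0 : ℂ) 1,
        0 < ((1 + z - z ^ 3 - z ^ 4) / (1 + z ^ 4)).re := by
  have hD : ∀ z ∈ Metric.ball (0 : ℂ) 1, (1 + z ^ 4) ≠ 0 := by
    intro z hz h
    rw [Metric.mem_ball, dist_zero_right] at hz
    have h4 : ‖z ^ 4‖ < 1 := by
      rw [norm_pow]
      calc ‖z‖ ^ 4 ≤ ‖z‖ := by
            nlinarith [norm_nonneg z, sq_nonneg (‖z‖ * (1 - ‖z‖)), sq_nonneg ‖z‖]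
        _ < 1 := hz
    have hz4 : z ^ 4 = -1 := by linear_combination h
    rw [hz4] at h4
    simp at h4
  refine ⟨?_, by norm_num, ?_⟩
  · apply DifferentiableOn.div
    · fun_prop
    · fun_prop
    · exact hD
  · intro z hz
    have hne := hD z hz
    rw [Metric.mem_ball, dist_zero_right] at hz
    have hs1 : z.re ^ 2 + z.im ^ 2 < 1 := by
      have h1 : ‖z‖ < 1 := hz
      have h2 := Complex.sq_norm z
      rw [Complex.normSq_apply] at h2
      nlinarith [norm_nonneg z]
    set N : ℂ := 1 + z - z ^ 3 - z ^ 4 with hN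
    set D : ℂ := 1 + z ^ 4 with hDdef
    have hnsq : 0 < Complex.normSq D := Complex.normSq_pos.mpr hne
    rw [Complex.div_re, ← add_div, lt_div_iff₀ hnsq, zero_mul]
    have hid : N.re * D.re + N.im * D.im =
        1 - (z.re ^ 2 + z.im ^ 2) ^ 4 + z.re * (1 - (z.re ^ 2 + z.im ^ 2) ^ 3)
          - (z.re ^ 3 - 3 * z.re * z.im ^ 2) * (1 - (z.re ^ 2 + z.im ^ 2)) := by
      simp only [hN, hDdef, Complex.add_re, Complex.add_im, Complex.sub_re,
        Complex.sub_im, Complex.one_re, Complex.one_im, pow_succ, pow_zero,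
        one_mul, Complex.mul_re, Complex.mul_im]
      ring
    rw [hid]
    exact key_ineq z.re z.im hs1
end

section
/- The rational function ω(z) = z·(1 - z² - 2z³)/(-2 - z + z³) is holomorphic on the open unit disk Δ, satisfies ω(0) = 0, and maps Δ into itself: |ω(z)| < 1 for all z ∈ Δ. -/
open Complex Metric

lemma schur_denom_ne_zero : ∀ z : ℂ, ‖z‖ ≤ 1 → -2 - z + z ^ 3 ≠ 0 := by
  intro z hz h
  have hz2 : Complex.normSq z ≤ 1 := by
    have := Complex.sq_norm z
    nlinarith [norm_nonneg z]
  set x := z.re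
  set y := z.im
  have hn : x ^ 2 + y ^ 2 ≤ 1 := by
    simpa [Complex.normSq_apply, sq] using hz2
  have hre : -2 - x + (x ^ 3 - 3 * x * y ^ 2) = 0 := by
    have := congrArg Complex.re h
    simp [Complex.ext_iff, pow_succ, Complex.mul_re, Complex.mul_im] at this ⊢
    ring_nf
    ring_nf at this
    linarith [this]
  have him : -y + (3 * x ^ 2 * y - y ^ 3) = 0 := by
    have := congrArg Complex.im h
    simp [pow_succ, Complex.mul_re, Complex.mul_im] at this
    ring_nf at this ⊢
    linarith [this]
  rcases mul_eq_zero.mp (show y * (3 * x ^ 2 - y ^ 2 - 1) = 0 by ring_nf; linarith [him]) with hy | hc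
  · rw [hy] at hre hn
    nlinarith [sq_nonneg (x - 1), sq_nonneg (x + 1), sq_nonneg x]
  · have hy2 : y ^ 2 = 3 * x ^ 2 - 1 := by linarith
    rw [hy2] at hre hn
    nlinarith [sq_nonneg (x + 1), sq_nonneg (2 * x + 1), sq_nonneg (2 * x - 1), sq_nonneg x]

lemma schur_g_bound :
    ∀ z : ℂ, ‖z‖ ≤ 1 →
      ‖(1 - z ^ 2 - 2 * z ^ 3) / (-2 - z + z ^ 3)‖ ≤ 1 := by
  have hden := schur_denom_ne_zero
  intro z hz
  have hdd : DiffContOnCl ℂ (fun z : ℂ => (1 - z ^ 2 - 2 * z ^ 3) / (-2 - z + z ^ 3))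
      (ball (0 : ℂ) 1) := by
    apply DiffContOnCl.mk
    · apply DifferentiableOn.div
      · fun_prop
      · fun_prop
      · intro w hw
        exact hden w (le_of_lt (by simpa using hw))
    · rw [closure_ball (0 : ℂ) one_ne_zero]
      apply ContinuousOn.div
      · fun_prop
      · fun_prop
      · intro w hw
        exact hden w (by simpa using hw)
  have key : ∀ w ∈ frontier (ball (0 : ℂ) 1),
      ‖(1 - w ^ 2 - 2 * w ^ 3) / (-2 - w + w ^ 3)‖ ≤ 1 := by
    intro w hw
    rw [frontier_ball (0 : ℂ) one_ne_zero] at hw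
    have hw1 : ‖w‖ = 1 := by simpa using hw
    have hcc : w * (starRingEnd ℂ) w = 1 := by
      rw [Complex.mul_conj]
      norm_cast
      rw [Complex.normSq_eq_norm_sq, hw1]; norm_num
    have hid : w ^ 3 * (starRingEnd ℂ) (1 - w ^ 2 - 2 * w ^ 3) = -2 - w + w ^ 3 := by
      simp only [map_sub, map_one, map_mul, map_pow, map_ofNat]
      set c := (starRingEnd ℂ) w with hc
      linear_combination (-(w * (w * c + 1)) - 2 * (w ^ 2 * c ^ 2 + w * c + 1)) * hcc
    have habs : ‖-2 - w + w ^ 3‖ = ‖1 - w ^ 2 - 2 * w ^ 3‖ := by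
      rw [← hid, norm_mul, norm_pow, hw1, Complex.norm_conj]
      ring
    rw [norm_div, habs]
    rcases eq_or_ne ‖1 - w ^ 2 - 2 * w ^ 3‖ 0 with h | h
    · rw [h]; norm_num
    · rw [div_self h]
  have := Complex.norm_le_of_forall_mem_frontier_norm_le isBounded_ball hdd key
    (z := z) (by rw [closure_ball (0 : ℂ) one_ne_zero]; simpa using hz)
  simpa using this

/-- The rational function `ω(z) = z (1 - z² - 2z³)/(-2 - z + z³)` is holomorphic
on the unit disk, satisfies `ω 0 = 0`, and maps the disk into itself:
`|ω(z)| < 1` for `|z| < 1` (i.e. it belongs to the class `Ω`). -/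
theorem example_schur_function :
    DifferentiableOn ℂ
        (fun z : ℂ => z * (1 - z ^ 2 - 2 * z ^ 3) / (-2 - z + z ^ 3))
        (Metric.ball (0 : ℂ) 1) ∧
      (0 : ℂ) * (1 - (0 : ℂ) ^ 2 - 2 * (0 : ℂ) ^ 3) / (-2 - (0 : ℂ) + (0 : ℂ) ^ 3) = 0 ∧
      ∀ z ∈ Metric.ball (0 : ℂ) 1,
        ‖z * (1 - z ^ 2 - 2 * z ^ 3) / (-2 - z + z ^ 3)‖ < 1 := by
  refine ⟨?_, by norm_num, ?_⟩
  · apply DifferentiableOn.div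
    · fun_prop
    · fun_prop
    · intro w hw
      exact schur_denom_ne_zero w (le_of_lt (by simpa using hw))
  · intro z hz
    have hz1 : ‖z‖ < 1 := by simpa using hz
    have hg := schur_g_bound z hz1.le
    calc ‖z * (1 - z ^ 2 - 2 * z ^ 3) / (-2 - z + z ^ 3)‖
        = ‖z‖ * ‖(1 - z ^ 2 - 2 * z ^ 3) / (-2 - z + z ^ 3)‖ := by
          rw [mul_div_assoc, norm_mul]
      _ ≤ ‖z‖ * 1 := by
          exact mul_le_mul_of_nonneg_left hg (norm_nonneg z)
      _ < 1 := by rwa [mul_one]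
end
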